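/- Let k ≥ 1 and let F be a forest with n vertices whose connected components are t rooted trees T_1, …, T_t, each having at least k + 2 vertices and each having every child subtree of its root of at most k + 1 vertices. Let (Â_p)_{p=0}^{n} be a greedy sequence for the k-hop dom on F. Then ext(Â_p) ≥ (k + 1) · p for all 1 ≤ p ≤ t, and ext(Â_p) ≥ (k/(k+1)) · (n − p) for all t ≤ p ≤ n. -/

import Mathlib

/-!
Every child subtree of a root has at most `k + 1` vertices, so each tree has depth at most
`k + 1` and two vertices of one child subtree are within distance `k`. Hence (i) every tree has a
`k`-ball of at least `k + 2` vertices; (ii) next to a vertex whose ball is maximal in its tree, no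
other vertex of that tree dominates more than `k + 1` new vertices; (iii) a maximal ball misses at
most `(|T| - 1) / (k + 1)` vertices of its tree `T`, since the root's ball already does: each vertex
at depth `k + 1` ends a child subtree that is a path of `k + 1` vertices.

By (i) and (ii) the first `t` greedy picks land in distinct trees, each on a vertex with a
maximal ball of at least `k + 2` vertices, which gives the first bound. After them at most
`(n - t) / (k + 1)` vertices are undominated by (iii), and each later pick dominates a new vertex
as long as one is left, so `p + (k + 1) · #undominated` stays at most `n`: the second bound.
-/

open Finset
open scoped Classical

/-- The closed `k`-neighborhood of `v`: all vertices at graph distance at most `k`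
from `v` (in particular `v` itself). -/
noncomputable def kNbhd {V : Type*} [Fintype V] (G : SimpleGraph V) (k : ℕ) (v : V) :
    Finset V :=
  Finset.univ.filter (fun u => G.Reachable u v ∧ G.dist u v ≤ k)

/-- `domk G k A` is the number of vertices `k`-hop dominated by `A`. -/
noncomputable def domk {V : Type*} [Fintype V] (G : SimpleGraph V) (k : ℕ) (A : Finset V) :
    ℕ :=
  (A.biUnion (kNbhd G k)).card

/-- `extk G k A` is the number of vertices externally `k`-hop dominated by `A`. -/
noncomputable def extk {V : Type*} [Fintype V] (G : SimpleGraph V) (k : ℕ) (A : Finset V) :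
    ℤ :=
  (domk G k A : ℤ) - (A.card : ℤ)

/-- A greedy sequence for `domk G k` (with `N` greedy steps): `A 0 = ∅` and each
`A (i+1)` is obtained from `A i` by inserting a new vertex maximizing `domk`. -/
def IsGreedySeq {V : Type*} [Fintype V] (G : SimpleGraph V) (k : ℕ) (N : ℕ)
    (A : ℕ → Finset V) : Prop :=
  A 0 = ∅ ∧ ∀ i < N, ∃ v ∉ A i, A (i + 1) = insert v (A i) ∧
    ∀ u ∉ A i, domk G k (insert u (A i)) ≤ domk G k (insert v (A i))

section Domination

variable {V : Type*} [Fintype V] {G : SimpleGraph V} {k : ℕ}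

lemma mem_kNbhd {x u : V} : u ∈ kNbhd G k x ↔ G.Reachable u x ∧ G.dist u x ≤ k := by
  simp [kNbhd]

lemma self_mem_kNbhd (x : V) : x ∈ kNbhd G k x :=
  mem_kNbhd.mpr ⟨.refl x, by simp⟩

lemma kNbhd_subset_component {r x : V} (hrx : G.Reachable r x) :
    kNbhd G k x ⊆ univ.filter (G.Reachable r) := fun _ hu =>
  mem_filter.mpr ⟨mem_univ _, hrx.trans (mem_kNbhd.mp hu).1.symm⟩

def IsMaxBallInComponent (G : SimpleGraph V) (k : ℕ) (a : V) : Prop :=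
  ∀ x, G.Reachable a x → (kNbhd G k x).card ≤ (kNbhd G k a).card

noncomputable def domSet (G : SimpleGraph V) (k : ℕ) (A : Finset V) : Finset V :=
  A.biUnion (kNbhd G k)

noncomputable def gain (G : SimpleGraph V) (k : ℕ) (A : Finset V) (x : V) : ℕ :=
  (kNbhd G k x \ domSet G k A).card

lemma domk_eq_card_domSet (A : Finset V) : domk G k A = (domSet G k A).card := rfl

lemma card_compl_domSet (A : Finset V) :
    (domSet G k A)ᶜ.card = Fintype.card V - domk G k A :=
  card_compl _

lemma kNbhd_subset_domSet {A : Finset V} {a : V} (ha : a ∈ A) : kNbhd G k a ⊆ domSet G k A :=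
  subset_biUnion_of_mem _ ha

lemma subset_domSet (A : Finset V) : A ⊆ domSet G k A := fun a ha =>
  kNbhd_subset_domSet ha (self_mem_kNbhd a)

lemma domSet_insert (A : Finset V) (x : V) :
    domSet G k (insert x A) = kNbhd G k x ∪ domSet G k A :=
  biUnion_insert

lemma domk_insert (A : Finset V) (x : V) :
    domk G k (insert x A) = gain G k A x + domk G k A := by
  rw [domk_eq_card_domSet, domk_eq_card_domSet, domSet_insert, ← card_sdiff_add_card, gain]

lemma card_compl_domSet_insert (A : Finset V) (x : V) :
    (domSet G k (insert x A))ᶜ.card + gain G k A x = (domSet G k A)ᶜ.card := by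
  have h := domk_insert (G := G) (k := k) A x
  have hle : domk G k (insert x A) ≤ Fintype.card V := card_le_univ _
  rw [card_compl_domSet, card_compl_domSet]
  omega

lemma gain_eq_card_kNbhd {A : Finset V} {x : V} (hx : ∀ a ∈ A, ¬ G.Reachable a x) :
    gain G k A x = (kNbhd G k x).card := by
  refine congrArg card (sdiff_eq_self_of_disjoint (Finset.disjoint_left.mpr fun z hzx hzA => ?_))
  obtain ⟨a, ha, hza⟩ := mem_biUnion.mp hzA
  exact hx a ha ((mem_kNbhd.mp hza).1.symm.trans (mem_kNbhd.mp hzx).1)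

lemma gain_le_card_kNbhd_sdiff {A : Finset V} {a : V} (ha : a ∈ A) (x : V) :
    gain G k A x ≤ (kNbhd G k x \ kNbhd G k a).card :=
  card_le_card (sdiff_subset_sdiff subset_rfl (kNbhd_subset_domSet ha))

lemma IsGreedySeq.exists_succ {N : ℕ} {A : ℕ → Finset V} (hA : IsGreedySeq G k N A) {p : ℕ}
    (hp : p < N) : ∃ v ∉ A p, A (p + 1) = insert v (A p) ∧
      ∀ u ∉ A p, gain G k (A p) u ≤ gain G k (A p) v := by
  obtain ⟨v, hv, hsucc, hmax⟩ := hA.2 p hp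
  refine ⟨v, hv, hsucc, fun u hu => ?_⟩
  have := hmax u hu
  rwa [domk_insert, domk_insert, add_le_add_iff_right] at this

lemma IsGreedySeq.card_eq {N : ℕ} {A : ℕ → Finset V} (hA : IsGreedySeq G k N A) {p : ℕ}
    (hp : p ≤ N) : (A p).card = p := by
  induction p with
  | zero => simp [hA.1]
  | succ p ih =>
    obtain ⟨v, hv, hsucc, -⟩ := hA.exists_succ hp
    rw [hsucc, card_insert_of_notMem hv, ih (by omega)]

lemma IsGreedySeq.add_mul_card_compl_domSet_le {A : ℕ → Finset V}
    (hA : IsGreedySeq G k (Fintype.card V) A) {c q : ℕ}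
    (hq : q + c * (domSet G k (A q))ᶜ.card ≤ Fintype.card V) {p : ℕ} (hqp : q ≤ p)
    (hp : p ≤ Fintype.card V) : p + c * (domSet G k (A p))ᶜ.card ≤ Fintype.card V := by
  induction p, hqp using Nat.le_induction with
  | base => exact hq
  | succ p hqp ih =>
    obtain ⟨v, -, hsucc, hmax⟩ := hA.exists_succ hp
    have hcompl := card_compl_domSet_insert (G := G) (k := k) (A p) v
    rw [← hsucc] at hcompl
    obtain hall | ⟨u, hu⟩ := (domSet G k (A p))ᶜ.eq_empty_or_nonempty
    · rw [hall, card_empty] at hcompl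
      rw [show (domSet G k (A (p + 1)))ᶜ.card = 0 by omega]
      omega
    -- an undominated vertex gains at least itself, so the greedy gain is positive
    have hu' : u ∉ domSet G k (A p) := mem_compl.mp hu
    have hgain : 1 ≤ gain G k (A p) v :=
      (card_pos.mpr ⟨u, mem_sdiff.mpr ⟨self_mem_kNbhd u, hu'⟩⟩).trans_le
        (hmax u fun h => hu' (subset_domSet _ h))
    have := ih (by omega)
    rcases Nat.eq_zero_or_pos c with rfl | hc
    · omega
    · nlinarith

end Domination

namespace SimpleGraph

variable {V : Type*} {G : SimpleGraph V}

lemma Walk.dist_add_dist_of_mem_support {a b x : V} {w : G.Walk a b}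
    (hw : w.length = G.dist a b) (hx : x ∈ w.support) :
    G.dist a x + G.dist x b = G.dist a b := by
  have hlen : (w.takeUntil x hx).length + (w.dropUntil x hx).length = w.length := by
    rw [← Walk.length_append, w.take_spec hx]
  have h₁ : G.dist a x ≤ (w.takeUntil x hx).length := dist_le _
  have h₂ : G.dist x b ≤ (w.dropUntil x hx).length := dist_le _
  have h₃ := (w.takeUntil x hx).reachable.dist_triangle_left b
  omega

/-- For `c` adjacent to `r`, this says that `u` lies in the subtree hanging from `c` when the
graph is rooted at `r`: some geodesic from `r` to `u` goes through `c`. -/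
def InChildSubtree (G : SimpleGraph V) (r c u : V) : Prop :=
  G.dist r u = G.dist c u + 1

variable {r c u : V}

lemma InChildSubtree.reachable (h : G.InChildSubtree r c u) : G.Reachable r u :=
  Reachable.of_dist_ne_zero (by rw [h]; omega)

lemma InChildSubtree.ne_root (h : G.InChildSubtree r c u) : u ≠ r := by
  rintro rfl
  simp [InChildSubtree] at h

lemma Adj.inChildSubtree_self (hc : G.Adj r c) : G.InChildSubtree r c c := by
  simp [InChildSubtree, dist_eq_one_iff_adj.mpr hc]

lemma exists_adj_inChildSubtree (hru : G.Reachable r u) (hne : u ≠ r) :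
    ∃ c, G.Adj r c ∧ G.InChildSubtree r c u := by
  obtain ⟨w, hw⟩ := hru.exists_walk_length_eq_dist
  cases w with
  | nil => exact absurd rfl hne
  | @cons _ c _ hc w =>
    refine ⟨c, hc, le_antisymm ?_ ?_⟩
    · exact (hc.reachable.dist_triangle_left u).trans (by rw [dist_eq_one_iff_adj.mpr hc]; omega)
    · rw [← hw, Walk.length_cons]
      exact Nat.add_le_add_right (dist_le w) 1

lemma InChildSubtree.of_adj_of_dist_eq (hc : G.Adj r c) {x y : V}
    (hx : G.InChildSubtree r c x) (hxy : G.Adj x y) (hd : G.dist r y = G.dist r x + 1) :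
    G.InChildSubtree r c y := by
  have h₁ := hxy.reachable.dist_triangle_right c
  have h₂ := hc.reachable.dist_triangle_left y
  rw [dist_eq_one_iff_adj.mpr hxy] at h₁
  rw [dist_eq_one_iff_adj.mpr hc] at h₂
  unfold InChildSubtree at hx ⊢
  omega

lemma InChildSubtree.root_notMem_support (hc : G.Adj r c) {a b : V}
    (ha : G.InChildSubtree r c a) (hb : G.InChildSubtree r c b) {w : G.Walk a b}
    (hw : w.length = G.dist a b) : r ∉ w.support := by
  intro hr
  have h₁ := w.dist_add_dist_of_mem_support hw hr
  have h₂ := (ha.reachable.symm.trans hc.reachable).dist_triangle_left b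
  rw [dist_comm (u := a), dist_comm (u := a)] at *
  unfold InChildSubtree at ha hb
  omega

lemma IsAcyclic.mem_support_of_inChildSubtree (hG : G.IsAcyclic) (hc : G.Adj r c)
    (hu : G.InChildSubtree r c u) {p : G.Walk r u} (hp : p.IsPath) : c ∈ p.support := by
  obtain ⟨q, -, hq⟩ := (hc.reachable.symm.trans hu.reachable).exists_path_of_dist
  have hcq : (Walk.cons hc q).IsPath :=
    Walk.isPath_of_length_eq_dist _ (by rw [Walk.length_cons, hq, hu])
  rw [Subtype.mk.inj (hG.subsingleton_path r u |>.elim ⟨p, hp⟩ ⟨_, hcq⟩)]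
  simp

lemma IsAcyclic.eq_of_inChildSubtree (hG : G.IsAcyclic) {c' : V} (hc : G.Adj r c)
    (hc' : G.Adj r c') (hu : G.InChildSubtree r c u) (hu' : G.InChildSubtree r c' u) :
    c = c' := by
  obtain ⟨p, hp, -⟩ := hu.reachable.exists_path_of_dist
  rw [hG.eq_snd_of_adj_start hp hc (hG.mem_support_of_inChildSubtree hc hu hp),
    hG.eq_snd_of_adj_start hp hc' (hG.mem_support_of_inChildSubtree hc' hu' hp)]

lemma InChildSubtree.of_adj (hG : G.IsAcyclic) (hc : G.Adj r c) {x y : V}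
    (hx : G.InChildSubtree r c x) (hxy : G.Adj x y) (hy : y ≠ r) : G.InChildSubtree r c y := by
  rcases hG.dist_eq_dist_add_one_of_adj_of_reachable r hxy hx.reachable with hd | hd
  · obtain ⟨c', hc', hy'⟩ := exists_adj_inChildSubtree (hx.reachable.trans hxy.reachable) hy
    rwa [hG.eq_of_inChildSubtree hc hc' hx (hy'.of_adj_of_dist_eq hc' hxy.symm hd)]
  · exact hx.of_adj_of_dist_eq hc hxy hd

lemma InChildSubtree.of_mem_support (hG : G.IsAcyclic) (hc : G.Adj r c) {a b : V}
    {w : G.Walk a b} (ha : G.InChildSubtree r c a) (hr : r ∉ w.support) {x : V}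
    (hx : x ∈ w.support) : G.InChildSubtree r c x := by
  induction w with
  | nil => simp_all
  | @cons a a' b hadj w ih =>
    simp only [Walk.support_cons, List.mem_cons, not_or] at hr hx
    rcases hx with rfl | hx
    · exact ha
    · exact ih (ha.of_adj hG hc hadj fun h => hr.2 (h ▸ w.start_mem_support)) hr.2 hx

lemma IsAcyclic.exists_path_inChildSubtree (hG : G.IsAcyclic) (hc : G.Adj r c) {a b : V}
    (ha : G.InChildSubtree r c a) (hb : G.InChildSubtree r c b) :
    ∃ w : G.Walk a b, w.IsPath ∧ w.length = G.dist a b ∧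
      ∀ x ∈ w.support, G.InChildSubtree r c x := by
  obtain ⟨w, hw, hlen⟩ := (ha.reachable.symm.trans hb.reachable).exists_path_of_dist
  exact ⟨w, hw, hlen, fun x hx =>
    ha.of_mem_support hG hc (ha.root_notMem_support hc hb hlen) hx⟩

lemma IsAcyclic.dist_eq_of_not_inChildSubtree (hG : G.IsAcyclic) (hc : G.Adj r c) {a b : V}
    (ha : G.InChildSubtree r c a) (hrb : G.Reachable r b) (hb : ¬ G.InChildSubtree r c b) :
    G.dist a b = G.dist r a + G.dist r b := by
  obtain ⟨w, -, hw⟩ := (ha.reachable.symm.trans hrb).exists_path_of_dist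
  have hr : r ∈ w.support := by
    by_contra hr
    exact hb (ha.of_mem_support hG hc hr w.end_mem_support)
  rw [← w.dist_add_dist_of_mem_support hw hr, dist_comm (u := a)]

section Finite

variable [Fintype V] {k : ℕ} {r c : V}

noncomputable def childSubtree (G : SimpleGraph V) (r c : V) : Finset V :=
  univ.filter fun u => G.dist r u = G.dist c u + 1

lemma mem_childSubtree {u : V} : u ∈ G.childSubtree r c ↔ G.InChildSubtree r c u := by
  simp [childSubtree, InChildSubtree]

lemma IsAcyclic.dist_add_one_le_card_childSubtree (hG : G.IsAcyclic) (hc : G.Adj r c)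
    {a b : V} (ha : G.InChildSubtree r c a) (hb : G.InChildSubtree r c b) :
    G.dist a b + 1 ≤ (G.childSubtree r c).card := by
  obtain ⟨w, hw, hlen, hsub⟩ := hG.exists_path_inChildSubtree hc ha hb
  calc G.dist a b + 1 = w.support.toFinset.card := by
        rw [List.toFinset_card_of_nodup hw.support_nodup, Walk.length_support, hlen]
    _ ≤ _ := card_le_card fun x hx => mem_childSubtree.mpr (hsub x (List.mem_toFinset.mp hx))

lemma IsAcyclic.dist_root_le (hG : G.IsAcyclic)
    (hbr : ∀ c, G.Adj r c → (G.childSubtree r c).card ≤ k + 1) {u : V}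
    (hru : G.Reachable r u) : G.dist r u ≤ k + 1 := by
  by_cases hur : u = r
  · simp [hur]
  obtain ⟨c, hc, hu⟩ := exists_adj_inChildSubtree hru hur
  have := hG.dist_add_one_le_card_childSubtree hc hc.inChildSubtree_self hu
  have := hbr c hc
  unfold InChildSubtree at hu
  omega

lemma IsAcyclic.kNbhd_sdiff_subset_childSubtree (hG : G.IsAcyclic)
    (hbr : ∀ c, G.Adj r c → (G.childSubtree r c).card ≤ k + 1) (hc : G.Adj r c) {v w : V}
    (hv : G.InChildSubtree r c v) (hrw : G.Reachable r w) (hd : G.dist r w ≤ G.dist r v) :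
    kNbhd G k v \ kNbhd G k w ⊆ G.childSubtree r c := by
  intro u hu
  rw [mem_sdiff, mem_kNbhd, mem_kNbhd] at hu
  obtain ⟨⟨huv, hduv⟩, hnw⟩ := hu
  have hru : G.Reachable r u := hv.reachable.trans huv.symm
  have hduw : k < G.dist w u := by
    rw [dist_comm]
    by_contra h
    exact hnw ⟨hru.symm.trans hrw, by omega⟩
  rw [mem_childSubtree]
  -- outside the subtree of `c`, `u` is seen from `v` through `r`, and `w` is no deeper than `v`
  by_contra huc
  have hvu := hG.dist_eq_of_not_inChildSubtree hc hv hru huc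
  rw [dist_comm] at hduv
  by_cases hwr : w = r
  · subst hwr
    omega
  obtain ⟨c', hc', hw⟩ := exists_adj_inChildSubtree hrw hwr
  by_cases huc' : G.InChildSubtree r c' u
  · have := hG.dist_add_one_le_card_childSubtree hc' hw huc'
    have := hbr c' hc'
    omega
  · have := hG.dist_eq_of_not_inChildSubtree hc' hw hru huc'
    omega

lemma IsAcyclic.card_kNbhd_sdiff_le_of_dist_le (hG : G.IsAcyclic)
    (hbr : ∀ c, G.Adj r c → (G.childSubtree r c).card ≤ k + 1) {v w : V}
    (hrv : G.Reachable r v) (hrw : G.Reachable r w) (hd : G.dist r w ≤ G.dist r v) :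
    (kNbhd G k v \ kNbhd G k w).card ≤ k + 1 := by
  by_cases hvr : v = r
  · subst hvr
    obtain rfl : v = w := hrw.dist_eq_zero_iff.mp (by simpa using hd)
    simp
  obtain ⟨c, hc, hv⟩ := exists_adj_inChildSubtree hrv hvr
  exact (card_le_card (hG.kNbhd_sdiff_subset_childSubtree hbr hc hv hrw hd)).trans (hbr c hc)

lemma IsAcyclic.card_kNbhd_sdiff_le (hG : G.IsAcyclic)
    (hbr : ∀ c, G.Adj r c → (G.childSubtree r c).card ≤ k + 1) {v w : V}
    (hrv : G.Reachable r v) (hmax : IsMaxBallInComponent G k v) (hrw : G.Reachable r w) :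
    (kNbhd G k w \ kNbhd G k v).card ≤ k + 1 := by
  rcases le_or_gt (G.dist r w) (G.dist r v) with hd | hd
  -- as `|N w| ≤ |N v|`, the set `N w \ N v` is no larger than `N v \ N w`
  · have h₁ := card_sdiff_add_card_inter (kNbhd G k w) (kNbhd G k v)
    have h₂ := card_sdiff_add_card_inter (kNbhd G k v) (kNbhd G k w)
    have h₃ := hmax w (hrv.symm.trans hrw)
    have h₄ := hG.card_kNbhd_sdiff_le_of_dist_le hbr hrv hrw hd
    rw [inter_comm] at h₁
    omega
  · exact hG.card_kNbhd_sdiff_le_of_dist_le hbr hrw hrv hd.le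

lemma IsAcyclic.exists_card_kNbhd_ge (hG : G.IsAcyclic) (hk : 1 ≤ k)
    (hbr : ∀ c, G.Adj r c → (G.childSubtree r c).card ≤ k + 1)
    (hsize : k + 2 ≤ (univ.filter (G.Reachable r)).card) :
    ∃ v, G.Reachable r v ∧ k + 2 ≤ (kNbhd G k v).card := by
  by_cases hall : ∀ u, G.Reachable r u → G.dist r u ≤ k
  · refine ⟨r, .refl r, hsize.trans (card_le_card fun u hu => ?_)⟩
    have hru := (mem_filter.mp hu).2
    exact mem_kNbhd.mpr ⟨hru.symm, dist_comm (G := G) ▸ hall u hru⟩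
  push Not at hall
  obtain ⟨u, hru, hdu⟩ := hall
  have hur : u ≠ r := by rintro rfl; simp at hdu
  obtain ⟨c, hc, hu⟩ := exists_adj_inChildSubtree hru hur
  have hdcu : G.dist c u = k := by
    have := hG.dist_root_le hbr hru
    unfold InChildSubtree at hu
    omega
  -- the geodesic from `c` to `u`, at depth `k + 1`, and `r` give `k + 2` vertices near `c`
  obtain ⟨w, hw, hlen⟩ := (hc.reachable.symm.trans hru).exists_path_of_dist
  have hr : r ∉ w.support := hc.inChildSubtree_self.root_notMem_support hc hu hlen
  have hsub : insert r w.support.toFinset ⊆ kNbhd G k c := by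
    intro x hx
    rw [mem_insert, List.mem_toFinset] at hx
    rcases hx with rfl | hx
    · exact mem_kNbhd.mpr ⟨hc.reachable, by rw [dist_eq_one_iff_adj.mpr hc]; exact hk⟩
    · have := w.dist_add_dist_of_mem_support hlen hx
      exact mem_kNbhd.mpr ⟨(w.takeUntil x hx).reachable.symm, by rw [dist_comm]; omega⟩
  refine ⟨c, hc.reachable, le_of_eq_of_le ?_ (card_le_card hsub)⟩
  rw [card_insert_of_notMem (by simpa using hr), List.toFinset_card_of_nodup hw.support_nodup,
    Walk.length_support, hlen, hdcu]

lemma IsAcyclic.eq_of_inChildSubtree_of_dist_eq (hG : G.IsAcyclic)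
    (hbr : ∀ c, G.Adj r c → (G.childSubtree r c).card ≤ k + 1) (hc : G.Adj r c) {u u' : V}
    (hu : G.InChildSubtree r c u) (hu' : G.InChildSubtree r c u') (hd : G.dist c u = k)
    (hd' : G.dist c u' = k) : u = u' := by
  obtain ⟨w, hw, hlen, hsub⟩ := hG.exists_path_inChildSubtree hc hc.inChildSubtree_self hu
  -- the geodesic from `c` to `u` already has `k + 1` vertices, so it is the whole subtree
  have hS : w.support.toFinset = G.childSubtree r c := by
    refine eq_of_subset_of_card_le
      (fun x hx => mem_childSubtree.mpr (hsub x (List.mem_toFinset.mp hx))) ?_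
    rw [List.toFinset_card_of_nodup hw.support_nodup, Walk.length_support, hlen, hd]
    exact hbr c hc
  have hu'w : u' ∈ w.support := by
    rw [← List.mem_toFinset, hS, mem_childSubtree]
    exact hu'
  have := w.dist_add_dist_of_mem_support hlen hu'w
  exact ((hu'.reachable.symm.trans hu.reachable).dist_eq_zero_iff.mp (by omega)).symm

lemma IsAcyclic.succ_mul_card_sdiff_kNbhd_add_one_le (hG : G.IsAcyclic)
    (hbr : ∀ c, G.Adj r c → (G.childSubtree r c).card ≤ k + 1) :
    (k + 1) * (univ.filter (G.Reachable r) \ kNbhd G k r).card + 1 ≤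
      (univ.filter (G.Reachable r)).card := by
  set L := univ.filter (G.Reachable r) \ kNbhd G k r
  have hL : ∀ u ∈ L, ∃ c, G.Adj r c ∧ G.InChildSubtree r c u ∧ G.dist c u = k := by
    intro u hu
    rw [mem_sdiff, mem_filter, mem_kNbhd, dist_comm] at hu
    obtain ⟨⟨-, hru⟩, hfar⟩ := hu
    have hur : u ≠ r := by rintro rfl; simp at hfar
    obtain ⟨c, hc, hcu⟩ := exists_adj_inChildSubtree hru hur
    refine ⟨c, hc, hcu, ?_⟩
    have := hG.dist_root_le hbr hru
    have : ¬ G.dist r u ≤ k := fun h => hfar ⟨hru.symm, h⟩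
    unfold InChildSubtree at hcu
    omega
  choose! ch hch hsub hdist using hL
  have hdisj : (L : Set V).PairwiseDisjoint fun u => G.childSubtree r (ch u) := by
    intro u hu u' hu' hne
    refine Finset.disjoint_left.mpr fun x hx hx' => hne ?_
    have hcc := hG.eq_of_inChildSubtree (hch u hu) (hch u' hu') (mem_childSubtree.mp hx)
      (mem_childSubtree.mp hx')
    exact hG.eq_of_inChildSubtree_of_dist_eq hbr (hch u hu) (hsub u hu) (hcc ▸ hsub u' hu')
      (hdist u hu) (hcc ▸ hdist u' hu')
  have hr : r ∉ L.biUnion fun u => G.childSubtree r (ch u) := by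
    simp only [mem_biUnion, not_exists, not_and]
    exact fun u _ hr => (mem_childSubtree.mp hr).ne_root rfl
  calc (k + 1) * L.card + 1 = L.card • (k + 1) + 1 := by rw [smul_eq_mul, mul_comm]
    _ ≤ ∑ u ∈ L, (G.childSubtree r (ch u)).card + 1 := by
        gcongr
        refine card_nsmul_le_sum _ _ _ fun u hu => ?_
        have := hG.dist_add_one_le_card_childSubtree (hch u hu)
          (hch u hu).inChildSubtree_self (hsub u hu)
        rwa [hdist u hu] at this
    _ = (insert r (L.biUnion fun u => G.childSubtree r (ch u))).card := by
        rw [card_insert_of_notMem hr, card_biUnion hdisj]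
    _ ≤ _ := by
        refine card_le_card (insert_subset (by simp) fun x hx => ?_)
        obtain ⟨u, -, hx⟩ := mem_biUnion.mp hx
        simpa using (mem_childSubtree.mp hx).reachable

lemma IsAcyclic.succ_mul_card_sdiff_kNbhd_add_one_le_of_isMaxBall (hG : G.IsAcyclic)
    (hbr : ∀ c, G.Adj r c → (G.childSubtree r c).card ≤ k + 1) {a : V} (hra : G.Reachable r a)
    (hmax : IsMaxBallInComponent G k a) :
    (k + 1) * (univ.filter (G.Reachable a) \ kNbhd G k a).card + 1 ≤
      (univ.filter (G.Reachable a)).card := by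
  have hcomp : univ.filter (G.Reachable a) = univ.filter (G.Reachable r) :=
    filter_congr fun u _ => ⟨hra.trans, hra.symm.trans⟩
  have hroot := hG.succ_mul_card_sdiff_kNbhd_add_one_le hbr
  have hsub : (univ.filter (G.Reachable r) \ kNbhd G k a).card ≤
      (univ.filter (G.Reachable r) \ kNbhd G k r).card := by
    rw [card_sdiff_of_subset (kNbhd_subset_component hra),
      card_sdiff_of_subset (kNbhd_subset_component .rfl)]
    exact Nat.sub_le_sub_left (hmax r hra.symm) _
  rw [hcomp]
  nlinarith

lemma card_connectedComponent_le : Fintype.card G.ConnectedComponent ≤ Fintype.card V :=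
  Fintype.card_le_of_surjective _ fun C => C.exists_rep

lemma card_connectedComponent_eq_of_existsUnique {ι : Type*} [Fintype ι] (r : ι → V)
    (h : ∀ v, ∃! i, G.Reachable (r i) v) :
    Fintype.card G.ConnectedComponent = Fintype.card ι := by
  refine (Fintype.card_of_bijective (f := fun i => G.connectedComponentMk (r i)) ⟨?_, ?_⟩).symm
  · intro i j hij
    exact (h (r j)).unique (ConnectedComponent.exact hij) .rfl
  · intro C
    obtain ⟨v, rfl⟩ := C.exists_rep
    obtain ⟨i, hi, -⟩ := h v
    exact ⟨i, ConnectedComponent.sound hi⟩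

lemma exists_forall_not_reachable_of_card_lt {A : Finset V}
    (h : A.card < Fintype.card G.ConnectedComponent) : ∃ x, ∀ a ∈ A, ¬ G.Reachable a x := by
  obtain ⟨C, -, hC⟩ := exists_mem_notMem_of_card_lt_card
    ((card_image_le (f := G.connectedComponentMk)).trans_lt (h.trans_eq card_univ.symm))
  obtain ⟨x, rfl⟩ := C.exists_rep
  exact ⟨x, fun a ha hax => hC (mem_image.mpr ⟨a, ha, ConnectedComponent.sound hax⟩)⟩

lemma exists_reachable_of_pairwise {A : Finset V}
    (hA : (A : Set V).Pairwise fun a b => ¬ G.Reachable a b)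
    (h : Fintype.card G.ConnectedComponent ≤ A.card) (x : V) : ∃ a ∈ A, G.Reachable a x := by
  have hinj : Set.InjOn G.connectedComponentMk A := fun a ha b hb hab => by
    by_contra hne
    exact hA ha hb hne (ConnectedComponent.exact hab)
  have hcard : (A.image G.connectedComponentMk).card = Fintype.card G.ConnectedComponent :=
    (card_le_univ _).antisymm (h.trans_eq (card_image_of_injOn hinj).symm)
  obtain ⟨a, ha, hax⟩ :=
    mem_image.mp (eq_univ_of_card _ hcard ▸ mem_univ (G.connectedComponentMk x))
  exact ⟨a, ha, ConnectedComponent.exact hax⟩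

end Finite

section BallBalanced

variable [Fintype V] {k : ℕ}

structure IsBallBalanced (G : SimpleGraph V) (k : ℕ) : Prop where
  exists_card_kNbhd_ge : ∀ x, ∃ y, G.Reachable x y ∧ k + 2 ≤ (kNbhd G k y).card
  card_kNbhd_sdiff_le : ∀ a, IsMaxBallInComponent G k a → ∀ w, G.Reachable a w →
    (kNbhd G k w \ kNbhd G k a).card ≤ k + 1
  succ_mul_card_sdiff_kNbhd_add_one_le : ∀ a, IsMaxBallInComponent G k a →
    (k + 1) * (univ.filter (G.Reachable a) \ kNbhd G k a).card + 1 ≤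
      (univ.filter (G.Reachable a)).card

def IsMaxBallTransversal (G : SimpleGraph V) (k : ℕ) (A : Finset V) : Prop :=
  (A : Set V).Pairwise (fun a b => ¬ G.Reachable a b) ∧ ∀ a ∈ A, IsMaxBallInComponent G k a

lemma IsBallBalanced.greedy_pick_new_component (hG : IsBallBalanced G k) {A : Finset V}
    (hA : ∀ a ∈ A, IsMaxBallInComponent G k a) {x : V} (hx : ∀ a ∈ A, ¬ G.Reachable a x)
    {v : V} (hv : ∀ u ∉ A, gain G k A u ≤ gain G k A v) :
    k + 2 ≤ gain G k A v ∧ (∀ a ∈ A, ¬ G.Reachable a v) ∧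
      IsMaxBallInComponent G k v := by
  have hfree : ∀ {y}, (∀ a ∈ A, ¬ G.Reachable a y) → y ∉ A := fun hy hyA => hy _ hyA .rfl
  obtain ⟨y, hxy, hy⟩ := hG.exists_card_kNbhd_ge x
  have hy' : ∀ a ∈ A, ¬ G.Reachable a y := fun a ha hay => hx a ha (hay.trans hxy.symm)
  have hgain : k + 2 ≤ gain G k A v :=
    hy.trans ((gain_eq_card_kNbhd hy').symm.trans_le (hv y (hfree hy')))
  have hv' : ∀ a ∈ A, ¬ G.Reachable a v := fun a ha hav => by
    have := (gain_le_card_kNbhd_sdiff ha v).trans (hG.card_kNbhd_sdiff_le a (hA a ha) v hav)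
    omega
  refine ⟨hgain, hv', fun z hvz => ?_⟩
  have hz : ∀ a ∈ A, ¬ G.Reachable a z := fun a ha haz => hv' a ha (haz.trans hvz.symm)
  rw [← gain_eq_card_kNbhd hz]
  exact (hv z (hfree hz)).trans (card_le_card sdiff_subset)

lemma IsBallBalanced.add_mul_card_compl_domSet_le (hG : IsBallBalanced G k) {A : Finset V}
    (hA : IsMaxBallTransversal G k A) (hcard : Fintype.card G.ConnectedComponent ≤ A.card) :
    A.card + (k + 1) * (domSet G k A)ᶜ.card ≤ Fintype.card V := by
  set comp : V → Finset V := fun a => univ.filter (G.Reachable a)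
  have hcover : (domSet G k A)ᶜ ⊆ A.biUnion fun a => comp a \ kNbhd G k a := by
    intro x hx
    obtain ⟨a, ha, hax⟩ := exists_reachable_of_pairwise hA.1 hcard x
    exact mem_biUnion.mpr ⟨a, ha, mem_sdiff.mpr ⟨by simpa [comp] using hax,
      fun h => mem_compl.mp hx (kNbhd_subset_domSet ha h)⟩⟩
  have hdisj : (A : Set V).PairwiseDisjoint comp := fun a ha b hb hab =>
    Finset.disjoint_left.mpr fun z hza hzb => hA.1 ha hb hab <| by
      simp only [comp, mem_filter] at hza hzb
      exact hza.2.trans hzb.2.symm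
  calc A.card + (k + 1) * (domSet G k A)ᶜ.card
      ≤ ∑ a ∈ A, 1 + (k + 1) * ∑ a ∈ A, (comp a \ kNbhd G k a).card := by
        rw [card_eq_sum_ones]
        gcongr
        exact (card_le_card hcover).trans card_biUnion_le
    _ = ∑ a ∈ A, ((k + 1) * (comp a \ kNbhd G k a).card + 1) := by
        rw [mul_sum, ← sum_add_distrib]
        exact sum_congr rfl fun _ _ => add_comm _ _
    _ ≤ ∑ a ∈ A, (comp a).card :=
        sum_le_sum fun a ha => hG.succ_mul_card_sdiff_kNbhd_add_one_le a (hA.2 a ha)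
    _ = (A.biUnion comp).card := (card_biUnion hdisj).symm
    _ ≤ Fintype.card V := card_le_univ _

lemma IsBallBalanced.isMaxBallTransversal_and_mul_le_domk (hG : IsBallBalanced G k)
    {A : ℕ → Finset V} (hA : IsGreedySeq G k (Fintype.card V) A) {p : ℕ}
    (hp : p ≤ Fintype.card G.ConnectedComponent) :
    IsMaxBallTransversal G k (A p) ∧ (k + 2) * p ≤ domk G k (A p) := by
  induction p with
  | zero => simp [hA.1, IsMaxBallTransversal]
  | succ p ih =>
    obtain ⟨⟨hpair, hmax⟩, hdom⟩ := ih (by omega)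
    have hpN : p < Fintype.card V := card_connectedComponent_le.trans_lt' hp
    obtain ⟨v, -, hsucc, hgreedy⟩ := hA.exists_succ hpN
    obtain ⟨x, hx⟩ := exists_forall_not_reachable_of_card_lt
      ((hA.card_eq hpN.le).trans_lt hp)
    obtain ⟨hgain, hfree, hvmax⟩ := hG.greedy_pick_new_component hmax hx hgreedy
    rw [hsucc, domk_insert]
    refine ⟨⟨?_, forall_mem_insert _ _ _ |>.mpr ⟨hvmax, hmax⟩⟩, by linarith⟩
    rw [coe_insert, Set.pairwise_insert]
    exact ⟨hpair, fun b hb _ => ⟨fun h => hfree b hb h.symm, hfree b hb⟩⟩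

theorem IsBallBalanced.succ_mul_le_extk (hG : IsBallBalanced G k) {A : ℕ → Finset V}
    (hA : IsGreedySeq G k (Fintype.card V) A) {p : ℕ}
    (hp : p ≤ Fintype.card G.ConnectedComponent) : ((k : ℤ) + 1) * p ≤ extk G k (A p) := by
  have hdom : ((k + 2) * p : ℤ) ≤ domk G k (A p) := by
    exact_mod_cast (hG.isMaxBallTransversal_and_mul_le_domk hA hp).2
  have hcard : (A p).card = p := hA.card_eq (hp.trans card_connectedComponent_le)
  rw [extk, hcard]
  linarith

theorem IsBallBalanced.mul_sub_le_extk (hG : IsBallBalanced G k) {A : ℕ → Finset V}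
    (hA : IsGreedySeq G k (Fintype.card V) A) {p : ℕ}
    (hp : Fintype.card G.ConnectedComponent ≤ p) (hpN : p ≤ Fintype.card V) :
    (k : ℝ) / (k + 1) * (Fintype.card V - p) ≤ extk G k (A p) := by
  set q := Fintype.card G.ConnectedComponent
  have hq : q + (k + 1) * (domSet G k (A q))ᶜ.card ≤ Fintype.card V := by
    have hcard : (A q).card = q := hA.card_eq (hp.trans hpN)
    have := hG.add_mul_card_compl_domSet_le
      (hG.isMaxBallTransversal_and_mul_le_domk hA le_rfl).1 hcard.ge
    rwa [hcard] at this
  have key := hA.add_mul_card_compl_domSet_le hq hp hpN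
  have hdom : domk G k (A p) ≤ Fintype.card V := card_le_univ _
  rw [card_compl_domSet] at key
  rw [extk, hA.card_eq hpN, div_mul_eq_mul_div, div_le_iff₀ (by positivity)]
  have : ((p + (k + 1) * (Fintype.card V - domk G k (A p)) : ℕ) : ℝ) ≤ Fintype.card V := by
    exact_mod_cast key
  push_cast [Nat.cast_sub hdom] at this ⊢
  nlinarith

lemma IsAcyclic.isBallBalanced (hG : G.IsAcyclic) (hk : 1 ≤ k)
    (hroot : ∀ v, ∃ r, G.Reachable r v ∧ k + 2 ≤ (univ.filter (G.Reachable r)).card ∧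
      ∀ c, G.Adj r c → (G.childSubtree r c).card ≤ k + 1) :
    IsBallBalanced G k where
  exists_card_kNbhd_ge x := by
    obtain ⟨r, hrx, hsize, hbr⟩ := hroot x
    obtain ⟨y, hry, hy⟩ := hG.exists_card_kNbhd_ge hk hbr hsize
    exact ⟨y, hrx.symm.trans hry, hy⟩
  card_kNbhd_sdiff_le a hmax w haw := by
    obtain ⟨r, hra, -, hbr⟩ := hroot a
    exact hG.card_kNbhd_sdiff_le hbr hra hmax (hra.trans haw)
  succ_mul_card_sdiff_kNbhd_add_one_le a hmax := by
    obtain ⟨r, hra, -, hbr⟩ := hroot a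
    exact hG.succ_mul_card_sdiff_kNbhd_add_one_le_of_isMaxBall hbr hra hmax

end BallBalanced

end SimpleGraph

/-- greedy external-domination guarantees on a forest whose `t`
components are rooted trees of at least `k+2` vertices, each child subtree of each
root having at most `k+1` vertices.  (The component of `v` is the set of vertices
reachable from `v`; a vertex `u` belongs to the child subtree of a child `c` of a
root `r` iff `dist r u = dist c u + 1`.) -/
theorem greedy_ext_on_decomposed_forest_delta_one {V : Type*} [Fintype V]
    (F : SimpleGraph V) (hF : F.IsAcyclic) (k t : ℕ) (hk : 1 ≤ k)
    (r : Fin t → V)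
    (hcomp : ∀ v : V, ∃! i : Fin t, F.Reachable (r i) v)
    (hsize : ∀ i : Fin t,
      k + 2 ≤ (Finset.univ.filter (fun u => F.Reachable (r i) u)).card)
    (hchild : ∀ i : Fin t, ∀ c : V, F.Adj (r i) c →
      (Finset.univ.filter (fun u => F.dist (r i) u = F.dist c u + 1)).card ≤ k + 1)
    (A : ℕ → Finset V) (hA : IsGreedySeq F k (Fintype.card V) A) :
    (∀ p : ℕ, 1 ≤ p → p ≤ t → ((k : ℤ) + 1) * p ≤ extk F k (A p)) ∧
    (∀ p : ℕ, t ≤ p → p ≤ Fintype.card V →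
      (k : ℝ) / (k + 1) * ((Fintype.card V : ℝ) - p) ≤ (extk F k (A p) : ℝ)) := by
  have hbal : F.IsBallBalanced k := hF.isBallBalanced hk fun v => by
    obtain ⟨i, hi, -⟩ := hcomp v
    exact ⟨r i, hi, hsize i, hchild i⟩
  have ht : Fintype.card F.ConnectedComponent = t := by
    rw [SimpleGraph.card_connectedComponent_eq_of_existsUnique r hcomp, Fintype.card_fin]
  subst ht
  exact ⟨fun p _ hp => hbal.succ_mul_le_extk hA hp,
    fun p hp hpN => hbal.mul_sub_le_extk hA hp hpN⟩
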